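/- For every n ≥ 2, the trivial normal subgroup {1} of F_n = FreeGroup (Fin n) (the kernel of the identity marking of the free group F_n) belongs to L_n and satisfies {1} ∈ D^{n-2}(L_n), i.e., its Cantor–Bendixson rank in L_n is at least n − 2. (Equivalently, Rk(F_n) ≥ n − 1, where Rk = CB + 1.) -/

import Mathlib

/-- The characteristic function of a subset, identifying `2^G` with `G → Bool`. -/
noncomputable def chi {G : Type*} (s : Set G) : G → Bool :=
  fun g => @decide (g ∈ s) (Classical.propDecidable _)

/-- `cbD A` is the set of points of `A` that are accumulation points of `A`,
i.e. the non-isolated points of the subspace `A`.  Its iterates `cbD^[k] A`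
are the finite Cantor–Bendixson derivatives `D^k(A)`. -/
def cbD {X : Type*} [TopologicalSpace X] (A : Set X) : Set X :=
  A ∩ derivedSet A

/-- A group `L` is fully residually free if for every finite subset `S ⊆ L` there
is a homomorphism `φ` to a free group of rank 2 with `φ s ≠ 1` for all `s ∈ S`, `s ≠ 1`. -/
def FullyResiduallyFree (L : Type*) [Group L] : Prop :=
  ∀ S : Finset L, ∃ φ : L →* FreeGroup (Fin 2), ∀ s ∈ S, s ≠ 1 → φ s ≠ 1

/-- `LnSet n` is the set of (characteristic functions of) normal subgroups `N` of
`F_n` such that `F_n / N` is fully residually free, inside `2^{F_n}` with the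
product topology. -/
def LnSet (n : ℕ) : Set (FreeGroup (Fin n) → Bool) :=
  {f | ∃ N : Subgroup (FreeGroup (Fin n)), ∃ hN : N.Normal,
    @FullyResiduallyFree (FreeGroup (Fin n) ⧸ N) (@QuotientGroup.Quotient.group _ _ N hN) ∧
      f = chi (N : Set (FreeGroup (Fin n)))}

/-!
Let `ρ : F_n → F_{n-1}` be a retraction fixing the first `n - 1` generators and sending the last
one to a word `w`. It is surjective with nontrivial kernel, so `f ↦ f ∘ ρ` is a continuous
injection of `L_{n-1}` into `L_n` that moves `{1}` off itself; it maps `D^j(L_{n-1})` into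
`D^j(L_n)`. Hence `{1} ∈ D^{j+1}(L_n)` as soon as `{1} ∈ D^j(L_{n-1})` and such retractions
discriminate every finite subset of `F_n`, i.e. converge to the identity marking.

Discrimination is proved in `SL(2, ℚ)`. The parabolic matrices `P_c = parabolic c 6`,
`c = 1, 2, …`, play ping-pong on `ℚ² \ 0`, so they generate a free group, and
`P_{n} = P_1^a P_2^b P_1^d` for suitable rational exponents (`P_c^s := parabolic c (6 s)`).
Replacing one exponent at a time by a variable, every nontrivial word of the finite set becomes a
polynomial matrix that is not identically `1`, so all but finitely many integer exponents keep it
nontrivial. With integer exponents the last generator goes to the image of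
`x₀^{m₁} x₁^{m₂} x₀^{m₃}`, which is the required `w`. The same representation shows that
`xᵢ ↦ a^{i+1} b a^{-(i+1)}` embeds `F_∞` into `F_2`, so free groups are fully residually free.
-/

open Polynomial
open scoped MatrixGroups

section CantorBendixson

variable {X Y : Type*} [TopologicalSpace X] [TopologicalSpace Y]

lemma image_cbD_iterate_subset {e : X → Y} (he : Continuous e) (he' : Function.Injective e)
    {A : Set X} {B : Set Y} (h : e '' A ⊆ B) (k : ℕ) : e '' cbD^[k] A ⊆ cbD^[k] B := by
  induction k with
  | zero => exact h
  | succ k ih =>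
    simp only [Function.iterate_succ_apply']
    refine (Set.image_inter_subset _ _ _).trans (Set.inter_subset_inter ih ?_)
    exact (he.image_derivedSet he').trans (derivedSet_mono _ _ ih)

lemma mem_derivedSet_of_forall_finset {ι : Type*} {x : ι → X} {A : Set (ι → X)}
    (h : ∀ I : Finset ι, ∃ y ∈ A, y ≠ x ∧ ∀ i ∈ I, y i = x i) :
    x ∈ derivedSet A := by
  rw [mem_derivedSet, accPt_iff_nhds]
  intro U hU
  rw [nhds_pi, Filter.mem_pi'] at hU
  obtain ⟨I, t, ht, hIt⟩ := hU
  obtain ⟨y, hyA, hyx, hyI⟩ := h I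
  refine ⟨y, ⟨hIt fun i hi => ?_, hyA⟩, hyx⟩
  rw [hyI i hi]
  exact mem_of_mem_nhds (ht i)

end CantorBendixson

section Discriminates

variable {G H K : Type*} [Group G] [Group H] [Group K]

def MonoidHom.Discriminates (f : G →* H) (T : Set G) : Prop :=
  ∀ t ∈ T, t ≠ 1 → f t ≠ 1

lemma MonoidHom.Discriminates.of_comp {f : G →* H} {g : H →* K} {T : Set G}
    (h : (g.comp f).Discriminates T) : f.Discriminates T :=
  fun t ht ht1 hft => h t ht ht1 (by simp [hft])

lemma MonoidHom.discriminates_of_injective {f : G →* H} (hf : Function.Injective f)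
    (T : Set G) : f.Discriminates T :=
  fun _ _ ht1 => (map_ne_one_iff f hf).2 ht1

lemma FullyResiduallyFree.of_injective {f : G →* H} (hf : Function.Injective f)
    (hH : FullyResiduallyFree H) : FullyResiduallyFree G := by
  classical
  intro S
  obtain ⟨φ, hφ⟩ := hH (S.image f)
  exact ⟨φ.comp f, fun s hs hs1 =>
    hφ (f s) (Finset.mem_image_of_mem f hs) ((map_ne_one_iff f hf).2 hs1)⟩

end Discriminates

section Specialization

variable {K ι Γ : Type*} [CommRing K] [IsDomain K] [Fintype ι] [DecidableEq ι] [Group Γ]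

lemma finite_setOf_map_eval_eq_one {A : Matrix.SpecialLinearGroup ι K[X]} {q₀ : K}
    (h₀ : Matrix.SpecialLinearGroup.map (evalRingHom q₀) A ≠ 1) :
    {q | Matrix.SpecialLinearGroup.map (evalRingHom q) A = 1}.Finite := by
  obtain ⟨i, j, hij⟩ : ∃ i j, (A i j).eval q₀ ≠ (1 : Matrix ι ι K) i j := by
    by_contra! h
    exact h₀ (Matrix.SpecialLinearGroup.ext _ _ fun i j => by simpa using h i j)
  have hp : A i j - C ((1 : Matrix ι ι K) i j) ≠ 0 := fun h =>
    hij (by simpa [sub_eq_zero] using congrArg (Polynomial.eval q₀) h)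
  refine (finite_setOfPred_isRoot hp).subset fun q hq => ?_
  simpa [sub_eq_zero] using
    congrArg (fun B : Matrix.SpecialLinearGroup ι K => (B : Matrix ι ι K) i j) hq

lemma Set.Infinite.exists_discriminates_map_eval {S : Set K} (hS : S.Infinite)
    (ψ : Γ →* Matrix.SpecialLinearGroup ι K[X]) {T : Finset Γ} {q₀ : K}
    (h₀ : ((Matrix.SpecialLinearGroup.map (evalRingHom q₀)).comp ψ).Discriminates T) :
    ∃ q ∈ S, ((Matrix.SpecialLinearGroup.map (evalRingHom q)).comp ψ).Discriminates T := by
  classical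
  have hbad : (⋃ t ∈ T.filter (· ≠ 1),
      {q | Matrix.SpecialLinearGroup.map (evalRingHom q) (ψ t) = 1}).Finite :=
    (T.filter (· ≠ 1)).finite_toSet.biUnion fun t ht =>
      finite_setOf_map_eval_eq_one (h₀ t (Finset.mem_filter.1 ht).1 (Finset.mem_filter.1 ht).2)
  obtain ⟨q, hqS, hq⟩ := hS.exists_notMem_finite hbad
  exact ⟨q, hqS, fun t ht ht1 h => hq (Set.mem_biUnion (Finset.mem_filter.2 ⟨ht, ht1⟩) h)⟩

end Specialization

namespace FreeGroup

variable {n : ℕ}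

def retractLast (w : FreeGroup (Fin n)) : FreeGroup (Fin (n + 1)) →* FreeGroup (Fin n) :=
  FreeGroup.lift (Fin.lastCases w FreeGroup.of)

lemma retractLast_comp_map_castSucc (w : FreeGroup (Fin n)) :
    (retractLast w).comp (map Fin.castSucc) = MonoidHom.id _ := by
  ext i; simp [retractLast]

lemma retractLast_surjective (w : FreeGroup (Fin n)) : Function.Surjective (retractLast w) :=
  fun x => ⟨map Fin.castSucc x, DFunLike.congr_fun (retractLast_comp_map_castSucc w) x⟩

lemma exists_ne_one_retractLast_eq_one (w : FreeGroup (Fin n)) :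
    ∃ z ≠ 1, retractLast w z = 1 := by
  have hw : retractLast w (map Fin.castSucc w) = w :=
    DFunLike.congr_fun (retractLast_comp_map_castSucc w) w
  refine ⟨of (Fin.last n) * (map Fin.castSucc w)⁻¹, fun h => ?_, ?_⟩
  · let κ : FreeGroup (Fin (n + 1)) →* FreeGroup Unit :=
      FreeGroup.lift (Fin.lastCases (of ()) 1)
    have hκ : κ (map Fin.castSucc w) = 1 := by
      rw [← MonoidHom.comp_apply, show κ.comp (map Fin.castSucc) = 1 by ext i; simp [κ]]
      rfl
    have := congrArg κ h
    rw [_root_.map_mul, _root_.map_inv, hκ, inv_one, mul_one, _root_.map_one] at this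
    simp [κ] at this
  · rw [_root_.map_mul, _root_.map_inv, hw]
    simp [retractLast]

end FreeGroup

namespace SL2

variable {R S : Type*} [CommRing R] [CommRing S]

def upper (r : R) : SL(2, R) := ⟨!![1, r; 0, 1], by simp⟩

def lower (r : R) : SL(2, R) := ⟨!![1, 0; r, 1], by simp⟩

def parabolic (c r : R) : SL(2, R) := upper (2 * c) * lower r * (upper (2 * c))⁻¹

variable (R) in
def parabolicRep : FreeGroup ℕ →* SL(2, R) :=
  FreeGroup.lift fun i => parabolic ((i : R) + 1) 6

def parabolicRepSnoc (n : ℕ) (g : SL(2, R)) : FreeGroup (Fin (n + 1)) →* SL(2, R) :=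
  FreeGroup.lift (Fin.lastCases g fun i => parabolic ((i : R) + 1) 6)

lemma coe_upper (r : R) : ((upper r : SL(2, R)) : Matrix (Fin 2) (Fin 2) R) = !![1, r; 0, 1] :=
  rfl

lemma coe_lower (r : R) : ((lower r : SL(2, R)) : Matrix (Fin 2) (Fin 2) R) = !![1, 0; r, 1] :=
  rfl

lemma coe_parabolic (c r : R) : ((parabolic c r : SL(2, R)) : Matrix (Fin 2) (Fin 2) R) =
    !![1 + 2 * c * r, -(4 * c ^ 2 * r); r, 1 - 2 * c * r] := by
  simp only [parabolic, Matrix.SpecialLinearGroup.coe_mul, Matrix.SpecialLinearGroup.coe_inv,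
    coe_upper, coe_lower, Matrix.adjugate_fin_two_of, Matrix.mul_fin_two]
  ext i j; fin_cases i <;> fin_cases j <;> simp <;> ring

lemma upper_add (r s : R) : upper (r + s) = upper r * upper s := by
  apply Subtype.ext; simp [coe_upper, add_comm]

lemma upper_pow (r : R) (k : ℕ) : upper r ^ k = upper (k * r) := by
  induction k with
  | zero => apply Subtype.ext; simp [coe_upper, Matrix.one_fin_two]
  | succ k ih => rw [pow_succ, ih, ← upper_add]; push_cast; ring_nf

lemma parabolic_add (c r s : R) : parabolic c (r + s) = parabolic c r * parabolic c s := by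
  apply Subtype.ext
  simp only [Matrix.SpecialLinearGroup.coe_mul, coe_parabolic, Matrix.mul_fin_two]
  ext i j; fin_cases i <;> fin_cases j <;> simp <;> ring

lemma parabolic_zpow (c r : R) (m : ℤ) : parabolic c r ^ m = parabolic c (m * r) := by
  induction m using Int.induction_on with
  | zero => apply Subtype.ext; simp [coe_parabolic, Matrix.one_fin_two]
  | succ k ih => rw [zpow_add_one, ih, ← parabolic_add]; push_cast; ring_nf
  | pred k ih =>
    rw [zpow_sub_one, ih, mul_inv_eq_iff_eq_mul, ← parabolic_add]; push_cast; ring_nf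

lemma parabolic_inv (c r : R) : (parabolic c r)⁻¹ = parabolic c (-r) := by
  simpa using parabolic_zpow c r (-1)

lemma map_upper (f : R →+* S) (r : R) :
    Matrix.SpecialLinearGroup.map f (upper r) = upper (f r) := by
  ext i j; fin_cases i <;> fin_cases j <;> simp [coe_upper]

lemma map_lower (f : R →+* S) (r : R) :
    Matrix.SpecialLinearGroup.map f (lower r) = lower (f r) := by
  ext i j; fin_cases i <;> fin_cases j <;> simp [coe_lower]

lemma map_parabolic (f : R →+* S) (c r : R) :
    Matrix.SpecialLinearGroup.map f (parabolic c r) = parabolic (f c) (f r) := by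
  simp [parabolic, map_upper, map_lower, map_ofNat]

lemma map_comp_parabolicRepSnoc (f : R →+* S) (n : ℕ) (g : SL(2, R)) :
    (Matrix.SpecialLinearGroup.map f).comp (parabolicRepSnoc n g) =
      parabolicRepSnoc n (Matrix.SpecialLinearGroup.map f g) := by
  refine FreeGroup.ext_hom _ _ fun i => ?_
  induction i using Fin.lastCases <;> simp [parabolicRepSnoc, map_parabolic, map_ofNat]

lemma parabolicRepSnoc_parabolic (n : ℕ) :
    parabolicRepSnoc n (parabolic ((n : R) + 1) 6) =
      (parabolicRep R).comp (FreeGroup.map Fin.val) := by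
  refine FreeGroup.ext_hom _ _ fun i => ?_
  induction i using Fin.lastCases <;> simp [parabolicRepSnoc, parabolicRep]

lemma comp_retractLast (n : ℕ) (w : FreeGroup (Fin n)) :
    ((parabolicRep R).comp (FreeGroup.map Fin.val)).comp (FreeGroup.retractLast w) =
      parabolicRepSnoc n ((parabolicRep R).comp (FreeGroup.map Fin.val) w) := by
  refine FreeGroup.ext_hom _ _ fun i => ?_
  induction i using Fin.lastCases <;>
    simp [parabolicRepSnoc, parabolicRep, FreeGroup.retractLast]

lemma exists_mem_discriminates_parabolicRepSnoc [IsDomain R] {n : ℕ}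
    {T : Finset (FreeGroup (Fin (n + 1)))} {S : Set R} (hS : S.Infinite) {g : R → SL(2, R)}
    (H : SL(2, R[X])) (hH : ∀ q, Matrix.SpecialLinearGroup.map (evalRingHom q) H = g q) {q₀ : R}
    (h₀ : (parabolicRepSnoc n (g q₀)).Discriminates T) :
    ∃ q ∈ S, (parabolicRepSnoc n (g q)).Discriminates T := by
  simp_rw [← hH, ← map_comp_parabolicRepSnoc] at h₀ ⊢
  exact hS.exists_discriminates_map_eval _ h₀

/-- Conjugation by `upper 2 * lower ((2 * x)⁻¹ - 2⁻¹)` carries the fixed line `(2, 1)` of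
`parabolic 1 b` to the fixed line `(2 (x + 1), 1)` of `parabolic (x + 1) 6`, and `b = 6 x ^ 2`
matches the shears. -/
lemma parabolic_eq_mul_mul {K : Type*} [Field K] (h2 : (2 : K) ≠ 0) {x : K} (hx : x ≠ 0) :
    parabolic (x + 1) 6 =
      parabolic 1 ((2 * x)⁻¹ - 2⁻¹) * parabolic 2 (6 * x ^ 2) *
        parabolic 1 (2⁻¹ - (2 * x)⁻¹) := by
  apply Subtype.ext
  simp only [Matrix.SpecialLinearGroup.coe_mul, coe_parabolic, Matrix.mul_fin_two]
  ext i j; fin_cases i <;> fin_cases j <;> simp <;> field_simp <;> ring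

/-- The linear form vanishing on the fixed line of `parabolic c r`. -/
def fixedForm (c : R) (v : Fin 2 → R) : R := v 0 - 2 * c * v 1

lemma fixedForm_parabolic_smul (c r : R) (v : Fin 2 → R) :
    fixedForm c (parabolic c r • v) = fixedForm c v := by
  simp [Matrix.SpecialLinearGroup.smul_def, coe_parabolic, fixedForm, Matrix.mulVec,
    dotProduct, Fin.sum_univ_two]
  ring

lemma parabolic_smul_apply_one (c r : R) (v : Fin 2 → R) :
    (parabolic c r • v) 1 = v 1 + r * fixedForm c v := by
  simp [Matrix.SpecialLinearGroup.smul_def, coe_parabolic, fixedForm, Matrix.mulVec,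
    dotProduct, Fin.sum_univ_two]
  ring

lemma fixedForm_ne_zero_or {c : R} {v : Fin 2 → R} (hv : v ≠ 0) :
    fixedForm c v ≠ 0 ∨ v 1 ≠ 0 := by
  by_contra! h
  apply hv
  ext i; fin_cases i <;> simp [fixedForm] at h ⊢ <;> grind

variable (R) in
def nonzeroVectors : SubMulAction SL(2, R) (Fin 2 → R) where
  carrier := {v | v ≠ 0}
  smul_mem' g _ hv := (smul_ne_zero_iff_ne g).2 hv

/- `K : Type` because the ping-pong lemma wants the index type `ℕ` and the group in the same
universe. -/
variable {K : Type} [Field K] [LinearOrder K] [IsStrictOrderedRing K]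

def attracting (c : K) : Set (nonzeroVectors K) :=
  {v | 2 * |fixedForm c v| < |(v : Fin 2 → K) 1| ∧ 0 ≤ fixedForm c v * (v : Fin 2 → K) 1}

def repelling (c : K) : Set (nonzeroVectors K) :=
  {v | 2 * |fixedForm c v| < |(v : Fin 2 → K) 1| ∧ fixedForm c v * (v : Fin 2 → K) 1 < 0}

lemma shear_mem_attracting {u y : K} (hne : u ≠ 0 ∨ y ≠ 0)
    (h : ¬(2 * |u| < |y| ∧ u * y < 0)) : 2 * |u| < |y + 6 * u| ∧ 0 ≤ u * (y + 6 * u) := by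
  rw [not_and_or, not_lt, not_lt] at h
  rcases lt_trichotomy u 0 with hu | rfl | hu
  · have hy : y ≤ -2 * u := by
      rcases h with h | h
      · linarith [le_abs_self y, abs_of_neg hu]
      · nlinarith
    rw [abs_of_neg hu, abs_of_neg (by linarith : y + 6 * u < 0)]
    constructor <;> nlinarith
  · simpa using hne
  · have hy : -2 * u ≤ y := by
      rcases h with h | h
      · linarith [neg_abs_le y, abs_of_pos hu]
      · nlinarith
    rw [abs_of_pos hu, abs_of_pos (by linarith : 0 < y + 6 * u)]
    constructor <;> nlinarith

lemma shear_mem_repelling {u y : K} (hne : u ≠ 0 ∨ y ≠ 0)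
    (h : ¬(2 * |u| < |y| ∧ 0 ≤ u * y)) : 2 * |u| < |y - 6 * u| ∧ u * (y - 6 * u) < 0 := by
  rw [not_and_or, not_lt, not_le] at h
  rcases lt_trichotomy u 0 with hu | rfl | hu
  · have hy : 2 * u ≤ y := by
      rcases h with h | h
      · linarith [neg_abs_le y, abs_of_neg hu]
      · nlinarith
    rw [abs_of_neg hu, abs_of_pos (by linarith : 0 < y - 6 * u)]
    constructor <;> nlinarith
  · simp only [abs_zero, mul_zero, zero_mul, lt_self_iff_false, or_false] at h
    simp_all
  · have hy : y ≤ 2 * u := by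
      rcases h with h | h
      · linarith [le_abs_self y, abs_of_pos hu]
      · nlinarith
    rw [abs_of_pos hu, abs_of_neg (by linarith : y - 6 * u < 0)]
    constructor <;> nlinarith

lemma not_lt_abs_and_lt_abs {i j : ℕ} (hij : i ≠ j) (v : Fin 2 → K) :
    ¬(2 * |fixedForm ((i : K) + 1) v| < |v 1| ∧ 2 * |fixedForm ((j : K) + 1) v| < |v 1|) := by
  rintro ⟨hi, hj⟩
  have hd : fixedForm ((i : K) + 1) v - fixedForm ((j : K) + 1) v = 2 * ((j : K) - i) * v 1 := by
    simp only [fixedForm]; ring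
  have hji : (1 : K) ≤ |(j : K) - i| := by
    have : (1 : ℤ) ≤ |(j : ℤ) - i| := Int.one_le_abs (by omega)
    exact_mod_cast this
  have := abs_sub (fixedForm ((i : K) + 1) v) (fixedForm ((j : K) + 1) v)
  rw [hd, abs_mul, abs_mul, abs_two] at this
  nlinarith [abs_nonneg (v 1)]

open Pointwise in
theorem injective_parabolicRep : Function.Injective (parabolicRep K) := by
  refine FreeGroup.injective_lift_of_ping_pong (G := SL(2, K)) _
    (fun i => attracting ((i : K) + 1)) (fun i => repelling ((i : K) + 1)) (fun i => ?_)
    (fun i j hij => ?_) (fun i j hij => ?_) (fun i j => ?_) (fun i => ?_) (fun i => ?_)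
  · refine ⟨⟨![2 * ((i : K) + 1), 1], fun h => by simpa using congrFun h 1⟩, ?_⟩
    simp [attracting, fixedForm]
  · exact Set.disjoint_left.2 fun v hi hj => not_lt_abs_and_lt_abs hij v.1 ⟨hi.1, hj.1⟩
  · exact Set.disjoint_left.2 fun v hi hj => not_lt_abs_and_lt_abs hij v.1 ⟨hi.1, hj.1⟩
  · refine Set.disjoint_left.2 fun v hi hj => ?_
    rcases eq_or_ne i j with rfl | hij
    · exact (not_le.2 hj.2) hi.2
    · exact not_lt_abs_and_lt_abs hij v.1 ⟨hi.1, hj.1⟩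
  · rintro _ ⟨w, hw, rfl⟩
    simpa [attracting, SubMulAction.val_smul, fixedForm_parabolic_smul,
      parabolic_smul_apply_one] using shear_mem_attracting (fixedForm_ne_zero_or w.2) hw
  · rintro _ ⟨w, hw, rfl⟩
    simpa [repelling, SubMulAction.val_smul, parabolic_inv, fixedForm_parabolic_smul,
      parabolic_smul_apply_one, ← sub_eq_add_neg] using
      shear_mem_repelling (fixedForm_ne_zero_or w.2) hw

end SL2

namespace FreeGroup

def conjPowEmbedding : FreeGroup ℕ →* FreeGroup (Fin 2) :=
  FreeGroup.lift fun i => of 0 ^ (i + 1) * of 1 * (of 0 ^ (i + 1))⁻¹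

lemma injective_conjPowEmbedding : Function.Injective conjPowEmbedding := by
  let ρ : FreeGroup (Fin 2) →* SL(2, ℚ) := FreeGroup.lift ![SL2.upper 2, SL2.lower 6]
  have h : ρ.comp conjPowEmbedding = SL2.parabolicRep ℚ := by
    ext i
    simp [ρ, conjPowEmbedding, SL2.parabolicRep, SL2.upper_pow, SL2.parabolic]
    ring_nf
  refine Function.Injective.of_comp (f := ρ) ?_
  rw [← MonoidHom.coe_comp, h]
  exact SL2.injective_parabolicRep

lemma fullyResiduallyFree_fin (m : ℕ) : FullyResiduallyFree (FreeGroup (Fin m)) :=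
  FullyResiduallyFree.of_injective (f := conjPowEmbedding.comp (map Fin.val))
    (injective_conjPowEmbedding.comp (map_injective Fin.val_injective))
    fun _ => ⟨MonoidHom.id _, fun _ _ => id⟩

open SL2 in
theorem exists_discriminates_retractLast {n : ℕ} (hn : 2 ≤ n)
    (T : Finset (FreeGroup (Fin (n + 1)))) :
    ∃ w : FreeGroup (Fin n), (retractLast w).Discriminates T := by
  set a : ℚ := (2 * (n : ℚ))⁻¹ - 2⁻¹
  set b : ℚ := 6 * n ^ 2
  -- the shears realised by integer powers of `parabolic 1 6` and `parabolic 2 6`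
  set S := Set.range fun m : ℤ => (m : ℚ) * 6
  have hS : S.Infinite := Set.infinite_range_of_injective fun m m' h => by simpa using h
  have h₀ : (parabolicRepSnoc n (parabolic 1 a * parabolic 2 b * parabolic 1 (-a))).Discriminates
      T := by
    rw [neg_sub, ← parabolic_eq_mul_mul two_ne_zero (Nat.cast_ne_zero.2 (by omega)),
      parabolicRepSnoc_parabolic]
    exact MonoidHom.discriminates_of_injective (f := (parabolicRep ℚ).comp (map Fin.val))
      (injective_parabolicRep.comp (map_injective Fin.val_injective)) _
  obtain ⟨_, ⟨m₃, rfl⟩, h₁⟩ := exists_mem_discriminates_parabolicRepSnoc hS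
    (parabolic 1 (C a) * parabolic 2 (C b) * parabolic 1 X)
    (g := (parabolic 1 a * parabolic 2 b * parabolic 1 ·)) (fun q => by simp [map_parabolic]) h₀
  obtain ⟨_, ⟨m₂, rfl⟩, h₂⟩ := exists_mem_discriminates_parabolicRepSnoc hS
    (parabolic 1 (C a) * parabolic 2 X * parabolic 1 (C ((m₃ : ℚ) * 6)))
    (g := (parabolic 1 a * parabolic 2 · * parabolic 1 ((m₃ : ℚ) * 6)))
    (fun q => by simp [map_parabolic]) h₁
  obtain ⟨_, ⟨m₁, rfl⟩, h₃⟩ := exists_mem_discriminates_parabolicRepSnoc hS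
    (parabolic 1 X * parabolic 2 (C ((m₂ : ℚ) * 6)) * parabolic 1 (C ((m₃ : ℚ) * 6)))
    (g := (parabolic 1 · * parabolic 2 ((m₂ : ℚ) * 6) * parabolic 1 ((m₃ : ℚ) * 6)))
    (fun q => by simp [map_parabolic]) h₂
  let x₀ : Fin n := ⟨0, by omega⟩
  let x₁ : Fin n := ⟨1, by omega⟩
  refine ⟨of x₀ ^ m₁ * of x₁ ^ m₂ * of x₀ ^ m₃,
    MonoidHom.Discriminates.of_comp (g := (parabolicRep ℚ).comp (map Fin.val)) ?_⟩
  rw [comp_retractLast]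
  convert h₃ using 2
  simp [parabolicRep, parabolic_zpow, x₀, x₁, one_add_one_eq_two]

end FreeGroup

lemma QuotientGroup.map_comap_injective {G H : Type*} [Group G] [Group H] (ψ : G →* H)
    (N : Subgroup H) [N.Normal] : Function.Injective (map (N.comap ψ) N ψ le_rfl) := by
  refine (injective_iff_map_eq_one _).2 fun x hx => ?_
  induction x using QuotientGroup.induction_on
  simpa [eq_one_iff] using hx

lemma chi_comap {G H : Type*} [Group G] [Group H] (ψ : G →* H) (N : Subgroup H) :
    chi (N.comap ψ : Set G) = chi (N : Set H) ∘ ψ :=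
  rfl

lemma comp_mem_LnSet {m n : ℕ} (ψ : FreeGroup (Fin m) →* FreeGroup (Fin n))
    {f : FreeGroup (Fin n) → Bool} (hf : f ∈ LnSet n) : f ∘ ψ ∈ LnSet m := by
  obtain ⟨N, hN, hfrf, rfl⟩ := hf
  exact ⟨N.comap ψ, hN.comap ψ,
    hfrf.of_injective (QuotientGroup.map_comap_injective ψ N), (chi_comap ψ N).symm⟩

lemma chi_bot_mem_LnSet (n : ℕ) :
    chi ((⊥ : Subgroup (FreeGroup (Fin n))) : Set (FreeGroup (Fin n))) ∈ LnSet n :=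
  ⟨⊥, inferInstance,
    (FreeGroup.fullyResiduallyFree_fin n).of_injective QuotientGroup.quotientBot.injective, rfl⟩

lemma chi_bot_mem_derivedSet {n j : ℕ} (hn : 2 ≤ n)
    (h : chi ((⊥ : Subgroup (FreeGroup (Fin n))) : Set (FreeGroup (Fin n))) ∈
      cbD^[j] (LnSet n)) :
    chi ((⊥ : Subgroup (FreeGroup (Fin (n + 1)))) : Set (FreeGroup (Fin (n + 1)))) ∈
      derivedSet (cbD^[j] (LnSet (n + 1))) := by
  refine mem_derivedSet_of_forall_finset fun I => ?_
  obtain ⟨w, hw⟩ := FreeGroup.exists_discriminates_retractLast hn I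
  obtain ⟨z, hz1, hz⟩ := FreeGroup.exists_ne_one_retractLast_eq_one w
  have himage : (· ∘ FreeGroup.retractLast w) '' cbD^[j] (LnSet n) ⊆ cbD^[j] (LnSet (n + 1)) :=
    image_cbD_iterate_subset (continuous_pi fun g => continuous_apply _)
      (FreeGroup.retractLast_surjective w).injective_comp_right
      (by rintro _ ⟨f, hf, rfl⟩; exact comp_mem_LnSet _ hf) j
  refine ⟨_, himage ⟨_, h, rfl⟩, fun he => ?_, fun t ht => ?_⟩
  · simpa [chi, hz, hz1] using congrFun he z
  · by_cases ht1 : t = 1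
    · simp [chi, ht1]
    · simp [chi, ht1, hw t ht ht1]

lemma chi_bot_mem_cbD_iterate : ∀ j n : ℕ, j + 2 ≤ n →
    chi ((⊥ : Subgroup (FreeGroup (Fin n))) : Set (FreeGroup (Fin n))) ∈ cbD^[j] (LnSet n)
  | 0, n, _ => chi_bot_mem_LnSet n
  | j + 1, n + 1, h => by
    rw [Function.iterate_succ_apply']
    exact ⟨chi_bot_mem_cbD_iterate j (n + 1) (by omega),
      chi_bot_mem_derivedSet (by omega) (chi_bot_mem_cbD_iterate j n (by omega))⟩

/-- For `n ≥ 2`, the trivial normal subgroup `{1}` of `F_n` (the kernel of the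
identity marking of `F_n`) belongs to `L_n` and lies in `D^{n-2}(L_n)`, i.e. its
Cantor–Bendixson rank in `L_n` is at least `n - 2`; equivalently `Rk(F_n) ≥ n - 1`. -/
theorem trivial_subgroup_CB_rank_ge (n : ℕ) (hn : 2 ≤ n) :
    chi ((⊥ : Subgroup (FreeGroup (Fin n))) : Set (FreeGroup (Fin n))) ∈ LnSet n ∧
      chi ((⊥ : Subgroup (FreeGroup (Fin n))) : Set (FreeGroup (Fin n))) ∈
        cbD^[n - 2] (LnSet n) :=
  ⟨chi_bot_mem_LnSet n, chi_bot_mem_cbD_iterate (n - 2) n (by omega)⟩
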